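/- Let κ be a nonzero complex number, and set c = 1 − 3(κ−4)²/(2κ) and h = (6−κ)/(2κ). Let V be a representation of the Virasoro algebra on which the central element C acts as c·Id, and let v ∈ V satisfy L_n v = 0 for all n ≥ 1 and L_0 v = h v. Then the vector w = (−2 L_{−2} + (κ/2) L_{−1}²) v satisfies L_n w = 0 for all n ≥ 1 and L_0 w = (h + 2) w. (In other words, w is a singular vector of conformal weight h + 2, so that in the Verma module M(c, h) the image of w generates a proper submodule.) -/

import Mathlib

/-!
Two commutator computations give `L₁ w = (κ(2h + 1) − 6) L₋₁ v` and
`L₂ w = (3κh − 8h − c) v`, and both coefficients vanish for the given `c` and `h`.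
Since `[L_n, L₁] = (n − 1) L_{n+1}`, the operators `L₁` and `L₂` generate all `L_n` with `n ≥ 1`,
so `L₁ w = L₂ w = 0` suffices. Finally `L_m` shifts `L₀`-eigenvalues by `−m`, so `w` has weight
`h + 2`.
-/

section

variable {V : Type*} [AddCommGroup V] [Module ℂ V]

def IsVirasoroRep (c : ℂ) (L : ℤ → Module.End ℂ V) : Prop :=
  ∀ m n : ℤ, ⁅L m, L n⁆ =
    ((m : ℂ) - (n : ℂ)) • L (m + n) +
      (if m + n = 0 then (((m : ℂ) ^ 3 - (m : ℂ)) / 12) * c else 0) • (1 : Module.End ℂ V)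

def IsHighestWeightVector (L : ℤ → Module.End ℂ V) (h : ℂ) (v : V) : Prop :=
  (∀ n : ℤ, 1 ≤ n → L n v = 0) ∧ L 0 v = h • v

noncomputable def singularVector (L : ℤ → Module.End ℂ V) (κ : ℂ) (v : V) : V :=
  (-2 : ℂ) • L (-2) v + (κ / 2) • L (-1) (L (-1) v)

namespace IsVirasoroRep

variable {c h : ℂ} {L : ℤ → Module.End ℂ V}

theorem apply_apply (hL : IsVirasoroRep c L) (m n : ℤ) (x : V) :
    L m (L n x) = L n (L m x) + ((m : ℂ) - n) • L (m + n) x +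
      (if m + n = 0 then (((m : ℂ) ^ 3 - m) / 12) * c else 0) • x := by
  have hx := congr($(hL m n) x)
  simp only [Ring.lie_def, LinearMap.sub_apply, Module.End.mul_apply, LinearMap.add_apply,
    LinearMap.smul_apply, Module.End.one_apply, sub_eq_iff_eq_add] at hx
  rw [hx]
  abel

theorem apply_apply_of_add_ne_zero (hL : IsVirasoroRep c L) {m n : ℤ} (hmn : m + n ≠ 0)
    (x : V) : L m (L n x) = L n (L m x) + ((m : ℂ) - n) • L (m + n) x := by
  simpa [hmn] using hL.apply_apply m n x

theorem apply_zero_apply_of_apply_zero_eq (hL : IsVirasoroRep c L) {x : V} {a : ℂ}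
    (hx : L 0 x = a • x) (m : ℤ) : L 0 (L m x) = (a - m) • L m x := by
  rcases eq_or_ne m 0 with rfl | hm
  · simp [hx]
  · rw [hL.apply_apply_of_add_ne_zero (by simpa using hm), hx, map_smul, zero_add]
    module

theorem apply_eq_zero_of_apply_one_of_apply_two (hL : IsVirasoroRep c L) {x : V}
    (h₁ : L 1 x = 0) (h₂ : L 2 x = 0) : ∀ n : ℤ, 1 ≤ n → L n x = 0 := by
  intro n hn
  induction n, hn using Int.leInduction with
  | base => exact h₁
  | succ n hn ih =>
    rcases eq_or_lt_of_le hn with rfl | hn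
    · exact h₂
    have hcomm := hL.apply_apply_of_add_ne_zero (m := n) (n := 1) (by omega) x
    rw [h₁, map_zero, ih, map_zero, zero_add, eq_comm, smul_eq_zero] at hcomm
    refine hcomm.resolve_left (sub_ne_zero.mpr ?_)
    exact_mod_cast hn.ne'

variable {v : V}

theorem apply_apply_of_isHighestWeightVector (hL : IsVirasoroRep c L)
    (hv : IsHighestWeightVector L h v) {n m : ℤ} (hn : 1 ≤ n) (hnm : n + m ≠ 0) :
    L n (L m v) = ((n : ℂ) - m) • L (n + m) v := by
  rw [hL.apply_apply_of_add_ne_zero hnm, hv.1 n hn, map_zero, zero_add]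

theorem apply_apply_neg_of_isHighestWeightVector (hL : IsVirasoroRep c L)
    (hv : IsHighestWeightVector L h v) {n : ℤ} (hn : 1 ≤ n) :
    L n (L (-n) v) = (2 * n * h + ((n : ℂ) ^ 3 - n) / 12 * c) • v := by
  rw [hL.apply_apply, hv.1 n hn, map_zero, zero_add, add_neg_cancel, hv.2, if_pos rfl]
  push_cast
  module

theorem apply_one_singularVector (hL : IsVirasoroRep c L) (hv : IsHighestWeightVector L h v)
    (κ : ℂ) :
    L 1 (singularVector L κ v) = (κ * (2 * h + 1) - 6) • L (-1) v := by
  have h1m1 := hL.apply_apply_neg_of_isHighestWeightVector hv (n := 1) le_rfl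
  have h1m2 := hL.apply_apply_of_isHighestWeightVector hv (n := 1) (m := -2) le_rfl (by norm_num)
  have h0m1 := hL.apply_zero_apply_of_apply_zero_eq hv.2 (-1)
  norm_num at h1m1 h1m2 h0m1
  rw [singularVector, map_add, map_smul, map_smul, h1m2, hL.apply_apply, h1m1]
  norm_num [h0m1]
  module

theorem apply_two_singularVector (hL : IsVirasoroRep c L) (hv : IsHighestWeightVector L h v)
    (κ : ℂ) :
    L 2 (singularVector L κ v) = (3 * κ * h - 8 * h - c) • v := by
  have h1m1 := hL.apply_apply_neg_of_isHighestWeightVector hv (n := 1) le_rfl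
  have h2m2 := hL.apply_apply_neg_of_isHighestWeightVector hv (n := 2) (by norm_num)
  have h2m1 := hL.apply_apply_of_isHighestWeightVector hv (n := 2) (m := -1) (by norm_num)
    (by norm_num)
  norm_num [hv.1 1 le_rfl] at h1m1 h2m2 h2m1
  rw [singularVector, map_add, map_smul, map_smul, h2m2,
    hL.apply_apply_of_add_ne_zero (by norm_num)]
  norm_num [h2m1, h1m1]
  module

theorem apply_zero_singularVector (hL : IsVirasoroRep c L) (hv : IsHighestWeightVector L h v)
    (κ : ℂ) :
    L 0 (singularVector L κ v) = (h + 2) • singularVector L κ v := by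
  have h0m1 := hL.apply_zero_apply_of_apply_zero_eq hv.2 (-1)
  rw [singularVector, map_add, map_smul, map_smul, hL.apply_zero_apply_of_apply_zero_eq hv.2,
    hL.apply_zero_apply_of_apply_zero_eq h0m1]
  push_cast
  module

end IsVirasoroRep

end

theorem virasoro_singular_vector
    (κ : ℂ) (hκ : κ ≠ 0)
    (c : ℂ) (hc : c = 1 - 3 * (κ - 4) ^ 2 / (2 * κ))
    (h : ℂ) (hh : h = (6 - κ) / (2 * κ))
    (V : Type*) [AddCommGroup V] [Module ℂ V]
    (L : ℤ → Module.End ℂ V)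
    (hVir : ∀ m n : ℤ, ⁅L m, L n⁆ =
      ((m : ℂ) - (n : ℂ)) • L (m + n) +
        (if m + n = 0 then (((m : ℂ) ^ 3 - (m : ℂ)) / 12) * c else 0) • (1 : Module.End ℂ V))
    (v : V) (hv_ann : ∀ n : ℤ, 1 ≤ n → L n v = 0) (hv_wt : L 0 v = h • v)
    (w : V) (hw : w = (-2 : ℂ) • L (-2) v + (κ / 2) • L (-1) (L (-1) v)) :
    (∀ n : ℤ, 1 ≤ n → L n w = 0) ∧ L 0 w = (h + 2) • w := by
  have hL : IsVirasoroRep c L := hVir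
  have hv : IsHighestWeightVector L h v := ⟨hv_ann, hv_wt⟩
  have hcoeff₁ : κ * (2 * h + 1) - 6 = 0 := by
    rw [hh]; field_simp; ring
  have hcoeff₂ : 3 * κ * h - 8 * h - c = 0 := by
    rw [hh, hc]; field_simp; ring
  rw [show w = singularVector L κ v from hw]
  refine ⟨hL.apply_eq_zero_of_apply_one_of_apply_two ?_ ?_, hL.apply_zero_singularVector hv κ⟩
  · rw [hL.apply_one_singularVector hv, hcoeff₁, zero_smul]
  · rw [hL.apply_two_singularVector hv, hcoeff₂, zero_smul]
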